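/- arXiv:1701.02512 — 2 statements merged into one kernel-verified Lean document; each statement's English description precedes it below -/
import Mathlib

section
/- Let $H$ be a real Hilbert space and $v_1,\ldots,v_p, w_1,\ldots,w_p \in H$. Suppose the Gram matrix of the combined family $\{v_1,\ldots,v_p,w_1,\ldots,w_p\}$ (after removing repeated vectors) is invertible whenever the two families differ. If $P_V$ and $P_W$ denote the orthogonal projections onto $V = \mathrm{span}\{v_i\}$ and $W = \mathrm{span}\{w_i\}$ respectively, and $P_V y = P_W y$ for some $y$ with $P_V y = \sum \beta_i v_i$, $\beta_i \neq 0$ for all $i$, then $\{v_1,\ldots,v_p\} = \{w_1,\ldots,w_p\}$ as sets. -/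
/-!
Since `P_V y = P_W y` lies in `W`, the vector `∑ βᵢ vᵢ` is a combination of the `wⱼ`. If the
families differed, the combined family would be linearly independent, and each `vᵢ` would
have to be one of the `wⱼ`: otherwise `βᵢ vᵢ = ∑ βⱼ vⱼ - ∑_{j ≠ i} βⱼ vⱼ` with `βᵢ ≠ 0` lies in
the span of the other vectors of the combined family. Hence `{vᵢ} ⊆ {wⱼ}`, and both sets have `p` elements.
-/

open Set Submodule

namespace LinearIndepOn

variable {R M ι : Type*} [Ring R] [AddCommGroup M] [Module R M] [Fintype ι]
  {v : ι → M} {β : ι → R} {t : Set M}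

theorem mem_of_sum_smul_mem_span (hind : LinearIndepOn R id (range v ∪ t))
    (hv : Function.Injective v) (hspan : ∑ i, β i • v i ∈ span R t) {i : ι} (hβ : β i ≠ 0) :
    v i ∈ t := by
  classical
  by_contra hvi
  set rest := (range v ∪ t) \ {v i}
  have ht : span R t ≤ span R rest :=
    span_mono fun x hx => ⟨Or.inr hx, fun hxi => hvi ((mem_singleton_iff.mp hxi) ▸ hx)⟩
  have hothers : ∑ j ∈ Finset.univ.erase i, β j • v j ∈ span R rest :=
    sum_mem fun j hj => smul_mem _ _ <| subset_span
      ⟨Or.inl (mem_range_self j), fun hji => Finset.ne_of_mem_erase hj (hv hji)⟩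
  have hsplit : β i • v i = ∑ j, β j • v j - ∑ j ∈ Finset.univ.erase i, β j • v j := by
    rw [← Finset.add_sum_erase _ _ (Finset.mem_univ i), add_sub_cancel_right]
  refine hβ (hind.eq_zero_of_smul_mem_span (Or.inl (mem_range_self i)) (β i) ?_)
  rw [image_id, id_eq, hsplit]
  exact sub_mem (ht hspan) hothers

theorem range_subset_of_sum_smul_mem_span (hind : LinearIndepOn R id (range v ∪ t))
    (hv : Function.Injective v) (hspan : ∑ i, β i • v i ∈ span R t) (hβ : ∀ i, β i ≠ 0) :
    range v ⊆ t :=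
  range_subset_iff.mpr fun i => hind.mem_of_sum_smul_mem_span hv hspan (hβ i)

end LinearIndepOn

theorem stmt13_general {H : Type*} [NormedAddCommGroup H] [InnerProductSpace ℝ H]
    {p : ℕ} (v w : Fin p → H)
    (hv : Function.Injective v) (hw : Function.Injective w)
    (hind : Set.range v ≠ Set.range w →
      LinearIndependent ℝ (fun x : (Set.range v ∪ Set.range w : Set H) => (x : H)))
    (W : Submodule ℝ H)
    (hW : W = Submodule.span ℝ (Set.range w))
    (PVy PWy : H)
    (hPWy : PWy ∈ W)
    (heq : PVy = PWy)
    (β : Fin p → ℝ) (hrep : PVy = ∑ i, β i • v i) (hβ : ∀ i, β i ≠ 0) :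
    Set.range v = Set.range w := by
  by_contra hne
  have hspan : ∑ i, β i • v i ∈ span ℝ (range w) := hrep ▸ heq ▸ hW ▸ hPWy
  have hsub : range v ⊆ range w :=
    LinearIndepOn.range_subset_of_sum_smul_mem_span (hind hne) hv hspan hβ
  have hcard : (range w).ncard ≤ (range v).ncard := by
    rw [ncard_range_of_injective hv, ncard_range_of_injective hw]
  exact hne (eq_of_subset_of_ncard_le hsub hcard (finite_range w))

/-- Uniqueness of the optimal points: let `v₁,…,v_p` and `w₁,…,w_p` be two families of distinct
vectors in a real Hilbert space such that, whenever the families differ, the combined family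
(as a set, i.e. with repetitions removed) is linearly independent (equivalently, its Gram
matrix is invertible). If the orthogonal projections of some `y` onto `V = span{vᵢ}` and
`W = span{wᵢ}` coincide, and `P_V y = ∑ βᵢ vᵢ` with all `βᵢ ≠ 0`, then the two families
coincide as sets. -/
theorem stmt13 {H : Type*} [NormedAddCommGroup H] [InnerProductSpace ℝ H] [CompleteSpace H]
    {p : ℕ} (v w : Fin p → H)
    (hv : Function.Injective v) (hw : Function.Injective w)
    (hind : Set.range v ≠ Set.range w →
      LinearIndependent ℝ (fun x : (Set.range v ∪ Set.range w : Set H) => (x : H)))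
    (V W : Submodule ℝ H)
    (hV : V = Submodule.span ℝ (Set.range v)) (hW : W = Submodule.span ℝ (Set.range w))
    (y PVy PWy : H)
    (hPVy : PVy ∈ V) (hPVyorth : ∀ u ∈ V, inner (𝕜 := ℝ) (y - PVy) u = 0)
    (hPWy : PWy ∈ W) (hPWyorth : ∀ u ∈ W, inner (𝕜 := ℝ) (y - PWy) u = 0)
    (heq : PVy = PWy)
    (β : Fin p → ℝ) (hrep : PVy = ∑ i, β i • v i) (hβ : ∀ i, β i ≠ 0) :
    Set.range v = Set.range w :=
  stmt13_general v w hv hw hind W hW PVy PWy hPWy heq β hrep hβ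
end

section
/- Let $(f_n)$ be a sequence of continuous functions on a compact metric space $\Theta$ converging uniformly to a continuous function $f$, and suppose for integers $p < p^*$ that $\max_{\Theta_{p+1}} f > \max_{\Theta_p} f$ (strict increase below $p^*$) while $\max_{\Theta_{p^*+1}} f = \max_{\Theta_{p^*}} f$, where $\Theta_q$ are compact sets. Fix $\epsilon$ with $0 < \epsilon < \min_{p < p^*}(\max_{\Theta_{p+1}} f - \max_{\Theta_p} f)$ and define $\widehat{p}_n = \min\{p : \max_{\Theta_{p+1}} f_n - \max_{\Theta_p} f_n < \epsilon\}$. Then $\widehat{p}_n = p^*$ for all sufficiently large $n$. -/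
/-!
Uniform convergence `fₙ → g` makes every maximum `max_{Θ_q} fₙ` converge to `max_{Θ_q} g`, hence
every first difference of the maxima converges too. The finitely many differences below `p*` have
limits above `ε` and the one at `p*` has limit `0 < ε`, so eventually the first difference below
`ε` is exactly the one at `p*`.
-/

open Filter Topology

theorem csSup_image_le_csSup_image_add {α : Type*} {S : Set α} (hS : S.Nonempty) {f g : α → ℝ}
    (hg : BddAbove (g '' S)) {δ : ℝ} (h : ∀ x ∈ S, f x ≤ g x + δ) :
    sSup (f '' S) ≤ sSup (g '' S) + δ := by
  refine csSup_le (hS.image f) ?_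
  rintro _ ⟨x, hx, rfl⟩
  exact (h x hx).trans (add_le_add_left (le_csSup hg ⟨x, hx, rfl⟩) δ)

theorem TendstoUniformlyOn.tendsto_csSup_image {α ι : Type*} {l : Filter ι} {F : ι → α → ℝ}
    {f : α → ℝ} {S : Set α} (hF : ∀ i, BddAbove (F i '' S)) (hf : BddAbove (f '' S))
    (h : TendstoUniformlyOn F f l S) :
    Tendsto (fun i => sSup (F i '' S)) l (𝓝 (sSup (f '' S))) := by
  rcases S.eq_empty_or_nonempty with rfl | hS
  · simp only [Set.image_empty, tendsto_const_nhds]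
  refine Metric.tendsto_nhds.2 fun ε hε => ?_
  filter_upwards [Metric.tendstoUniformlyOn_iff.1 h (ε / 2) (half_pos hε)] with i hi
  have hclose : ∀ x ∈ S, |f x - F i x| ≤ ε / 2 := fun x hx => (hi x hx).le
  have hupper : sSup (F i '' S) ≤ sSup (f '' S) + ε / 2 :=
    csSup_image_le_csSup_image_add hS hf fun x hx => by linarith [(abs_le.1 (hclose x hx)).1]
  have hlower : sSup (f '' S) ≤ sSup (F i '' S) + ε / 2 :=
    csSup_image_le_csSup_image_add hS (hF i) fun x hx => by
      linarith [(abs_le.1 (hclose x hx)).2]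
  rw [Real.dist_eq, abs_sub_lt_iff]
  constructor <;> linarith

theorem stmt17_general {E : Type*} [MetricSpace E]
    (f : ℕ → E → ℝ) (g : E → ℝ)
    (hf : ∀ n, Continuous (f n)) (hg : Continuous g)
    (hunif : TendstoUniformly f g atTop)
    (Θ : ℕ → Set E) (hΘc : ∀ q, IsCompact (Θ q))
    (pstar : ℕ)
    (heq : sSup (g '' Θ (pstar + 1)) = sSup (g '' Θ pstar))
    (ε : ℝ) (hε : 0 < ε)
    (hgap : ∀ p < pstar, ε < sSup (g '' Θ (p + 1)) - sSup (g '' Θ p))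
    (phat : ℕ → ℕ)
    (hphat : ∀ n, phat n = sInf {p : ℕ | sSup (f n '' Θ (p + 1)) - sSup (f n '' Θ p) < ε}) :
    ∀ᶠ n in atTop, phat n = pstar := by
  have hmax (q : ℕ) : Tendsto (fun n => sSup (f n '' Θ q)) atTop (𝓝 (sSup (g '' Θ q))) :=
    hunif.tendstoUniformlyOn.tendsto_csSup_image
      (fun n => ((hΘc q).image (hf n)).bddAbove) ((hΘc q).image hg).bddAbove
  have hdiff (p : ℕ) := (hmax (p + 1)).sub (hmax p)
  have hbelow : ∀ᶠ n in atTop, ∀ p ∈ Set.Iio pstar,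
      ε < sSup (f n '' Θ (p + 1)) - sSup (f n '' Θ p) :=
    (eventually_all_finite (Set.finite_Iio pstar)).2 fun p hp =>
      (hdiff p).eventually_const_lt (hgap p hp)
  have hat : ∀ᶠ n in atTop, sSup (f n '' Θ (pstar + 1)) - sSup (f n '' Θ pstar) < ε :=
    (hdiff pstar).eventually_lt_const (by rwa [heq, sub_self])
  filter_upwards [hbelow, hat] with n hbelow_n hat_n
  rw [hphat n]
  exact IsLeast.csInf_eq ⟨hat_n, fun p hp => not_lt.1 fun hlt => (hbelow_n p hlt).not_gt hp⟩

/-- Consistency of the thresholded first-difference rule for selecting the number of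
variables: if `fₙ → f` uniformly on a compact metric space, the maxima of `f` over the
compact sets `Θ_q` strictly increase (by more than `ε`) for `q < p*` and stabilize at `p*`,
then the estimator `p̂ₙ = min{p : max_{Θ_{p+1}} fₙ - max_{Θ_p} fₙ < ε}` equals `p*` for all
sufficiently large `n`. -/
theorem stmt17 {E : Type*} [MetricSpace E] [CompactSpace E]
    (f : ℕ → E → ℝ) (g : E → ℝ)
    (hf : ∀ n, Continuous (f n)) (hg : Continuous g)
    (hunif : TendstoUniformly f g atTop)
    (Θ : ℕ → Set E) (hΘc : ∀ q, IsCompact (Θ q)) (hΘne : ∀ q, (Θ q).Nonempty)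
    (pstar : ℕ)
    (hstrict : ∀ p < pstar, sSup (g '' Θ p) < sSup (g '' Θ (p + 1)))
    (heq : sSup (g '' Θ (pstar + 1)) = sSup (g '' Θ pstar))
    (ε : ℝ) (hε : 0 < ε)
    (hgap : ∀ p < pstar, ε < sSup (g '' Θ (p + 1)) - sSup (g '' Θ p))
    (phat : ℕ → ℕ)
    (hphat : ∀ n, phat n = sInf {p : ℕ | sSup (f n '' Θ (p + 1)) - sSup (f n '' Θ p) < ε}) :
    ∀ᶠ n in atTop, phat n = pstar :=
  stmt17_general f g hf hg hunif Θ hΘc pstar heq ε hε hgap phat hphat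
end
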